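/- arXiv:1709.01124 — 2 statements merged into one kernel-verified Lean document; each statement's English description precedes it below -/
import Mathlib

section
/- For every instance (G, T^1,…,T^K, c) of the Steiner Forest problem, the projection of the extended directed flow polytope onto the x-variables equals the projection of the strengthened extended directed cut polytope onto the x-variables, i.e. Proj_x(𝔏^{edf}) = Proj_x(𝔏^{sedc}). -/
open Finset
open scoped Classical

noncomputable section

variable {V : Type} [Fintype V] [DecidableEq V]

/-- `g(δ⁺(S))`: the value of the arc vector `g` on the arcs leaving `S`. -/
def acutOut (g : V → V → ℝ) (S : Finset V) : ℝ :=
  ∑ i ∈ S, ∑ j ∈ Sᶜ, g i j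

/-- `t ∈ 𝔗_r^{k…K} = (T^k ∪ … ∪ T^K) \ {r^k}`. -/
def memTkK {K : ℕ} (T : Fin K → Finset V) (r : Fin K → V) (k : Fin K) (t : V) : Prop :=
  (∃ l : Fin K, k ≤ l ∧ t ∈ T l) ∧ t ≠ r k

/-- The subgraph of `G` formed by the edges with `x`-value one. -/
def fromX (G : SimpleGraph V) (x : Sym2 V → ℝ) : SimpleGraph V where
  Adj i j := G.Adj i j ∧ x s(i, j) = 1
  symm := by
    constructor
    intro i j h
    exact ⟨h.1.symm, by rw [Sym2.eq_swap]; exact h.2⟩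
  loopless := by
    constructor
    intro i h
    exact G.ne_of_adj h.1 rfl

/-- `H` is a feasible Steiner Forest of the instance `(G, T)`: a cycle-free
subgraph of `G` connecting each terminal set. -/
def IsSteinerForest (G H : SimpleGraph V) {K : ℕ} (T : Fin K → Finset V) : Prop :=
  H ≤ G ∧ H.IsAcyclic ∧ ∀ k : Fin K, ∀ s ∈ T k, ∀ t ∈ T k, H.Reachable s t

/-- Membership in the extended directed flow polytope `𝔏^{edf}`. -/
def memLedf (G : SimpleGraph V) {K : ℕ} (T : Fin K → Finset V) (r : Fin K → V)
    (x : Sym2 V → ℝ) (xk : Fin K → Sym2 V → ℝ)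
    (f : Fin K → V → V → V → ℝ) (z : Fin K → Fin K → ℝ) : Prop :=
  -- variable bounds
  (∀ e ∈ G.edgeSet, 0 ≤ x e ∧ x e ≤ 1) ∧
  (∀ k : Fin K, ∀ e ∈ G.edgeSet, 0 ≤ xk k e ∧ xk k e ≤ 1) ∧
  (∀ k l : Fin K, k ≤ l → 0 ≤ z k l ∧ z k l ≤ 1) ∧
  (∀ (k : Fin K) (t : V), memTkK T r k t →
    (∀ i j : V, ¬ G.Adj i j → f k t i j = 0) ∧
    (∀ i j : V, 0 ≤ f k t i j ∧ f k t i j ≤ 1)) ∧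
  -- (1)  x_{ij} ≥ Σ_k x^k_{ij}
  (∀ i j : V, G.Adj i j → (∑ k : Fin K, xk k s(i, j)) ≤ x s(i, j)) ∧
  -- (2)  Σ_{ℓ ≤ k} z_{ℓk} = 1
  (∀ k : Fin K, (∑ l ∈ Finset.Iic k, z l k) = 1) ∧
  -- (3)  z_{kk} ≥ z_{kℓ} for k ∈ [K] \ {1, K} and ℓ ≥ k + 1
  (∀ k l : Fin K, k.val ≠ 0 → k.val ≠ K - 1 → k < l → z k l ≤ z k k) ∧
  -- (4)  f^{ks}_{ij} + f^{kt}_{ji} ≤ x^k_{ij}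
  (∀ k : Fin K, ∀ u t : V, memTkK T r k u → memTkK T r k t →
    ∀ i j : V, G.Adj i j → f k u i j + f k t j i ≤ xk k s(i, j)) ∧
  -- (5)  flow conservation: a flow of value z_{kℓ} from r^k to each t ∈ T^ℓ
  (∀ k l : Fin K, k ≤ l → ∀ t ∈ T l, t ≠ r k → ∀ i : V,
    (∑ j, f k t j i) - (∑ j, f k t i j) =
      if i = r k then -(z k l) else if i = t then z k l else 0)

/-- All components of a point of `𝔏^{edf}` lie in `{0,1}`. -/
def LedfIntegral (G : SimpleGraph V) {K : ℕ}
    (x : Sym2 V → ℝ) (xk : Fin K → Sym2 V → ℝ)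
    (f : Fin K → V → V → V → ℝ) (z : Fin K → Fin K → ℝ) : Prop :=
  (∀ e ∈ G.edgeSet, x e = 0 ∨ x e = 1) ∧
  (∀ k : Fin K, ∀ e ∈ G.edgeSet, xk k e = 0 ∨ xk k e = 1) ∧
  (∀ (k : Fin K) (t i j : V), f k t i j = 0 ∨ f k t i j = 1) ∧
  (∀ k l : Fin K, k ≤ l → (z k l = 0 ∨ z k l = 1))

/-- Membership in the strengthened extended directed cut polytope `𝔏^{sedc}`. -/
def memLsedc (G : SimpleGraph V) {K : ℕ} (T : Fin K → Finset V) (r : Fin K → V)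
    (x : Sym2 V → ℝ) (y : Fin K → V → V → ℝ) (z : Fin K → Fin K → ℝ) : Prop :=
  -- variable bounds
  (∀ e ∈ G.edgeSet, 0 ≤ x e ∧ x e ≤ 1) ∧
  (∀ (k : Fin K) (i j : V), ¬ G.Adj i j → y k i j = 0) ∧
  (∀ (k : Fin K) (i j : V), 0 ≤ y k i j ∧ y k i j ≤ 1) ∧
  (∀ k l : Fin K, k ≤ l → 0 ≤ z k l ∧ z k l ≤ 1) ∧
  -- (1)  y^k(δ⁺(S)) ≥ z_{kℓ} whenever r^k ∈ S and S ∩ T^ℓ ≠ T^ℓ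
  (∀ k l : Fin K, k ≤ l → ∀ S : Finset V, r k ∈ S → T l ∩ S ≠ T l →
    z k l ≤ acutOut (y k) S) ∧
  -- (2)  Σ_{ℓ ≤ k} z_{ℓk} = 1
  (∀ k : Fin K, (∑ l ∈ Finset.Iic k, z l k) = 1) ∧
  -- (3)  z_{kk} ≥ z_{kℓ} for k ∈ [K] \ {1, K} and ℓ ≥ k + 1
  (∀ k l : Fin K, k.val ≠ 0 → k.val ≠ K - 1 → k < l → z k l ≤ z k k) ∧
  -- (4)  Σ_k (y^k_{ij} + y^k_{ji}) ≤ x_{ij}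
  (∀ i j : V, G.Adj i j → (∑ k : Fin K, (y k i j + y k j i)) ≤ x s(i, j))

/-- All components of a point of `𝔏^{sedc}` lie in `{0,1}`. -/
def LsedcIntegral (G : SimpleGraph V) {K : ℕ}
    (x : Sym2 V → ℝ) (y : Fin K → V → V → ℝ) (z : Fin K → Fin K → ℝ) : Prop :=
  (∀ e ∈ G.edgeSet, x e = 0 ∨ x e = 1) ∧
  (∀ (k : Fin K) (i j : V), y k i j = 0 ∨ y k i j = 1) ∧
  (∀ k l : Fin K, k ≤ l → (z k l = 0 ∨ z k l = 1))

set_option linter.unusedSectionVars false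

namespace SFAux

def excess (f : V → V → ℝ) (i : V) : ℝ := (∑ j, f j i) - ∑ j, f i j

def Cap (c f : V → V → ℝ) : Prop := ∀ i j, 0 ≤ f i j ∧ f i j ≤ c i j

def Res (c f : V → V → ℝ) (i j : V) : Prop := f i j < c i j ∨ 0 < f j i

lemma sum_excess (f : V → V → ℝ) : ∑ i, excess f i = 0 := by
  simp only [excess, Finset.sum_sub_distrib]
  rw [Finset.sum_comm]
  ring

lemma sum_excess_subset (f : V → V → ℝ) (S : Finset V) :
    ∑ i ∈ S, excess f i = acutOut (fun i j => f j i) S - acutOut f S := by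
  have h3 : (∑ i ∈ S, ∑ j ∈ S, f j i) = ∑ i ∈ S, ∑ j ∈ S, f i j := Finset.sum_comm
  have key : ∑ i ∈ S, excess f i
      = ((∑ i ∈ S, ∑ j ∈ S, f j i) + ∑ i ∈ S, ∑ j ∈ Sᶜ, f j i)
        - ((∑ i ∈ S, ∑ j ∈ S, f i j) + ∑ i ∈ S, ∑ j ∈ Sᶜ, f i j) := by
    rw [← Finset.sum_add_distrib, ← Finset.sum_add_distrib, ← Finset.sum_sub_distrib]
    apply Finset.sum_congr rfl
    intro i _
    rw [excess, Finset.sum_add_sum_compl S (fun j => f j i),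
        Finset.sum_add_sum_compl S (fun j => f i j)]
  rw [key, h3, acutOut, acutOut]; ring

lemma excess_add_arc (f : V → V → ℝ) (b c : V) (δ : ℝ) (i : V) :
    excess (fun x y => if x = b ∧ y = c then f x y + δ else f x y) i =
      excess f i + (if i = c then δ else 0) - (if i = b then δ else 0) := by
  have h1 : ∀ x y : V, (if x = b ∧ y = c then f x y + δ else f x y)
      = f x y + (if x = b ∧ y = c then δ else 0) := by
    intro x y; split <;> simp
  simp only [excess, h1, Finset.sum_add_distrib]
  have h2 : (∑ j, if j = b ∧ i = c then δ else 0) = if i = c then δ else 0 := by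
    by_cases h : i = c <;> simp [h, Finset.sum_ite_eq']
  have h3 : (∑ j, if i = b ∧ j = c then δ else 0) = if i = b then δ else 0 := by
    by_cases h : i = b <;> simp [h, Finset.sum_ite_eq']
  rw [h2, h3]; ring

lemma excess_smul (a : ℝ) (f : V → V → ℝ) (i : V) :
    excess (fun x y => a * f x y) i = a * excess f i := by
  simp [excess, Finset.mul_sum, mul_sub]

lemma augment (cap f : V → V → ℝ) (hf : Cap cap f) (hcd : ∀ i, cap i i = 0) (s : V)
    {v : V} (h : Relation.ReflTransGen (Res cap f) s v) :
    ∃ ε > 0, ∃ C > 0, ∀ ε', 0 < ε' → ε' ≤ ε → ∃ f',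
      Cap cap f' ∧ (∀ i j, |f' i j - f i j| ≤ C * ε') ∧
      (∀ i, excess f' i =
        excess f i + (if i = v then ε' else 0) - (if i = s then ε' else 0)) := by
  induction h with
  | refl =>
      refine ⟨1, one_pos, 1, one_pos, fun ε' hε' _ => ⟨f, hf, ?_, ?_⟩⟩
      · intro i j; simp [hε'.le]
      · intro i; ring
  | @tail b c hsb hbc ih =>
      obtain ⟨ε₀, hε₀, C₀, hC₀, hgen⟩ := ih
      have hbc' : b ≠ c := by
        rintro rfl
        have hfbb : f b b = 0 := le_antisymm ((hf b b).2.trans_eq (hcd b)) (hf b b).1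
        rcases hbc with h1 | h1
        · rw [hfbb, hcd b] at h1; exact lt_irrefl 0 h1
        · rw [hfbb] at h1; exact lt_irrefl 0 h1
      rcases hbc with h1 | h1
      · -- forward arc: f b c < cap b c
        set ρ := cap b c - f b c with hρdef
        have hρ : 0 < ρ := by simp [hρdef]; linarith
        refine ⟨min ε₀ (ρ / (C₀ + 1)), lt_min hε₀ (by positivity), C₀ + 1, by linarith,
          fun ε' hε' hle => ?_⟩
        obtain ⟨f', hf'cap, hf'close, hf'ex⟩ :=
          hgen ε' hε' (hle.trans (min_le_left _ _))
        have hC1e : (C₀ + 1) * ε' ≤ ρ := by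
          have h4 : ε' ≤ ρ / (C₀ + 1) := hle.trans (min_le_right _ _)
          calc (C₀ + 1) * ε' ≤ (C₀ + 1) * (ρ / (C₀ + 1)) := by nlinarith
            _ = ρ := by field_simp
        refine ⟨fun x y => if x = b ∧ y = c then f' x y + ε' else f' x y, ?_, ?_, ?_⟩
        · intro i j
          by_cases hij : i = b ∧ j = c
          · obtain ⟨rfl, rfl⟩ := hij
            simp only [and_self, if_true]
            constructor
            · linarith [(hf'cap i j).1]
            · have := abs_le.1 (hf'close i j)
              simp only [hρdef] at hC1e
              nlinarith [this.2]
          · simpa [hij] using hf'cap i j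
        · intro i j
          by_cases hij : i = b ∧ j = c
          · obtain ⟨rfl, rfl⟩ := hij
            simp only [and_self, if_true]
            have := abs_le.1 (hf'close i j)
            rw [abs_le]
            constructor <;> nlinarith [this.1, this.2]
          · simp only [hij, if_false]
            calc |f' i j - f i j| ≤ C₀ * ε' := hf'close i j
              _ ≤ (C₀ + 1) * ε' := by nlinarith
        · intro i
          rw [excess_add_arc, hf'ex i]
          by_cases h5 : i = b <;> by_cases h6 : i = c <;> simp [h5, h6] <;> ring
      · -- backward arc: 0 < f c b
        set ρ := f c b with hρdef
        have hρ : 0 < ρ := h1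
        refine ⟨min ε₀ (ρ / (C₀ + 1)), lt_min hε₀ (by positivity), C₀ + 1, by linarith,
          fun ε' hε' hle => ?_⟩
        obtain ⟨f', hf'cap, hf'close, hf'ex⟩ :=
          hgen ε' hε' (hle.trans (min_le_left _ _))
        have hεz : (C₀ + 1) * ε' ≤ ρ := by
          have h4 : ε' ≤ ρ / (C₀ + 1) := hle.trans (min_le_right _ _)
          calc (C₀ + 1) * ε' ≤ (C₀ + 1) * (ρ / (C₀ + 1)) := by nlinarith
            _ = ρ := by field_simp
        refine ⟨fun x y => if x = c ∧ y = b then f' x y + (-ε') else f' x y, ?_, ?_, ?_⟩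
        · intro i j
          by_cases hij : i = c ∧ j = b
          · obtain ⟨rfl, rfl⟩ := hij
            simp only [and_self, if_true]
            have := abs_le.1 (hf'close i j)
            constructor
            · simp only [hρdef] at hεz; nlinarith [this.1]
            · linarith [(hf'cap i j).2]
          · simpa [hij] using hf'cap i j
        · intro i j
          by_cases hij : i = c ∧ j = b
          · obtain ⟨rfl, rfl⟩ := hij
            simp only [and_self, if_true]
            have := abs_le.1 (hf'close i j)
            rw [abs_le]
            constructor <;> nlinarith [this.1, this.2]
          · simp only [hij, if_false]
            calc |f' i j - f i j| ≤ C₀ * ε' := hf'close i j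
              _ ≤ (C₀ + 1) * ε' := by nlinarith
        · intro i
          rw [excess_add_arc, hf'ex i]
          by_cases h5 : i = b <;> by_cases h6 : i = c <;>
            simp [h5, h6, hbc', Ne.symm hbc'] <;> ring

lemma exists_flow (cap : V → V → ℝ) (hc : ∀ i j, 0 ≤ cap i j) (hcd : ∀ i, cap i i = 0)
    (s t : V) (hst : s ≠ t) (z : ℝ) (hz : 0 ≤ z)
    (hcut : ∀ S : Finset V, s ∈ S → t ∉ S → z ≤ acutOut cap S) :
    ∃ f : V → V → ℝ, Cap cap f ∧
      ∀ i, excess f i = if i = s then -z else if i = t then z else 0 := by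
  classical
  set F : Set (V → V → ℝ) :=
    {f | Cap cap f ∧ ∀ i, i ≠ s → i ≠ t → excess f i = 0} with hFdef
  have hconted : ∀ i : V, Continuous fun f : V → V → ℝ => excess f i := by
    intro i
    unfold excess
    exact (continuous_finset_sum _ fun j _ =>
        (continuous_apply i).comp (continuous_apply j)).sub
      (continuous_finset_sum _ fun j _ => (continuous_apply j).comp (continuous_apply i))
  have hFcompact : IsCompact F := by
    have hFeq : F = Set.Icc (0 : V → V → ℝ) cap ∩
        {f | ∀ i, i ≠ s → i ≠ t → excess f i = 0} := by
      ext f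
      simp only [hFdef, Set.mem_setOf_eq, Set.mem_inter_iff, Set.mem_Icc, Pi.le_def, Cap]
      constructor
      · rintro ⟨h1, h2⟩
        exact ⟨⟨fun i j => (h1 i j).1, fun i j => (h1 i j).2⟩, h2⟩
      · rintro ⟨⟨h1, h2⟩, h3⟩
        exact ⟨fun i j => ⟨h1 i j, h2 i j⟩, h3⟩
    rw [hFeq]
    apply IsCompact.inter_right isCompact_Icc
    have : {f : V → V → ℝ | ∀ i, i ≠ s → i ≠ t → excess f i = 0}
        = ⋂ i, ⋂ (_ : i ≠ s), ⋂ (_ : i ≠ t), {f | excess f i = 0} := by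
      ext f; simp
    rw [this]
    exact isClosed_iInter fun i => isClosed_iInter fun _ => isClosed_iInter fun _ =>
      isClosed_eq (hconted i) continuous_const
  have hFne : F.Nonempty := by
    refine ⟨fun _ _ => 0, fun i j => ⟨le_refl 0, hc i j⟩, fun i _ _ => ?_⟩
    simp [excess]
  obtain ⟨f, hfF, hmax⟩ :=
    hFcompact.exists_isMaxOn hFne ((hconted t).continuousOn)
  -- t is not reachable in the residual graph
  have hreach : ¬ Relation.ReflTransGen (Res cap f) s t := by
    intro hr
    obtain ⟨ε, hε, C, hC, hgen⟩ := augment cap f hfF.1 hcd s hr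
    obtain ⟨f', hf'cap, -, hf'ex⟩ := hgen ε hε le_rfl
    have hf'F : f' ∈ F := by
      refine ⟨hf'cap, fun i his hit => ?_⟩
      rw [hf'ex i, hfF.2 i his hit]
      simp [hit, his]
    have := hmax hf'F
    simp only [Set.mem_setOf_eq] at this
    have h2 := hf'ex t
    rw [if_pos rfl, if_neg (Ne.symm hst)] at h2
    have h3 : excess f' t ≤ excess f t := this
    linarith
  set S : Finset V :=
    Finset.univ.filter (fun v => Relation.ReflTransGen (Res cap f) s v) with hSdef
  have hsS : s ∈ S := by
    simp only [hSdef, Finset.mem_filter]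
    exact ⟨Finset.mem_univ s, Relation.ReflTransGen.refl⟩
  have htS : t ∉ S := by
    simp only [hSdef, Finset.mem_filter, Finset.mem_univ, true_and]
    exact hreach
  have hbound : ∀ i ∈ S, ∀ j, j ∉ S → f i j = cap i j ∧ f j i = 0 := by
    intro i hi j hj
    have hnR : ¬ Res cap f i j := by
      intro hR
      apply hj
      simp only [hSdef, Finset.mem_filter, Finset.mem_univ, true_and] at hi ⊢
      exact hi.tail hR
    rw [Res, not_or, not_lt] at hnR
    exact ⟨le_antisymm ((hfF.1 i j)).2 hnR.1, le_antisymm (not_lt.1 hnR.2) (hfF.1 j i).1⟩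
  have hsum : ∑ i ∈ S, excess f i = - acutOut cap S := by
    rw [sum_excess_subset]
    have h1 : acutOut (fun i j => f j i) S = 0 := by
      apply Finset.sum_eq_zero
      intro i hi
      apply Finset.sum_eq_zero
      intro j hj
      exact (hbound i hi j (Finset.mem_compl.1 hj)).2
    have h2 : acutOut f S = acutOut cap S := by
      apply Finset.sum_congr rfl
      intro i hi
      apply Finset.sum_congr rfl
      intro j hj
      exact (hbound i hi j (Finset.mem_compl.1 hj)).1
    rw [h1, h2]; ring
  have hsumS : ∑ i ∈ S, excess f i = excess f s := by
    apply Finset.sum_eq_single_of_mem s hsS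
    intro i hi hne
    exact hfF.2 i hne (fun h => htS (h ▸ hi))
  have hes : excess f s = - acutOut cap S := by rw [← hsumS, hsum]
  have het : excess f t = acutOut cap S := by
    have h1 : ∑ i, excess f i = excess f s + ∑ i ∈ Finset.univ.erase s, excess f i :=
      (Finset.add_sum_erase _ _ (Finset.mem_univ s)).symm
    have h2 : ∑ i ∈ Finset.univ.erase s, excess f i = excess f t := by
      apply Finset.sum_eq_single_of_mem t (by simp [Ne.symm hst])
      intro i hi hne
      exact hfF.2 i (Finset.ne_of_mem_erase hi) hne
    have h3 := sum_excess f
    rw [h1, h2, hes] at h3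
    linarith
  have hval : z ≤ excess f t := het ▸ hcut S hsS htS
  rcases eq_or_lt_of_le hz with hz0 | hz0
  · refine ⟨fun _ _ => 0, fun i j => ⟨le_refl 0, hc i j⟩, fun i => ?_⟩
    rw [← hz0]
    simp [excess]
  · have hvpos : 0 < excess f t := lt_of_lt_of_le hz0 hval
    set a : ℝ := z / excess f t with hadef
    have ha0 : 0 ≤ a := div_nonneg hz hvpos.le
    have ha1 : a ≤ 1 := (div_le_one hvpos).2 hval
    refine ⟨fun i j => a * f i j, fun i j => ?_, fun i => ?_⟩
    · exact ⟨mul_nonneg ha0 ((hfF.1 i j)).1,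
        (mul_le_of_le_one_left ((hfF.1 i j)).1 ha1).trans ((hfF.1 i j)).2⟩
    · rw [excess_smul]
      by_cases h5 : i = s
      · subst h5
        rw [hes, ← het, if_pos rfl]
        rw [hadef]
        field_simp
      · by_cases h6 : i = t
        · subst h6
          rw [if_neg h5, if_pos rfl, hadef]
          field_simp
        · rw [hfF.2 i h5 h6, if_neg h5, if_neg h6, mul_zero]

end SFAux

/-- For every Steiner Forest instance,
`Proj_x(𝔏^{edf}) = Proj_x(𝔏^{sedc})`. -/
theorem proj_Ledf_eq_proj_Lsedc (G : SimpleGraph V) {K : ℕ}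
    (T : Fin K → Finset V) (r : Fin K → V)
    (hroot : ∀ k, r k ∈ T k)
    (hdisj : ∀ k l : Fin K, k ≠ l → Disjoint (T k) (T l)) :
    {x : Sym2 V → ℝ | ∃ (xk : Fin K → Sym2 V → ℝ) (f : Fin K → V → V → V → ℝ)
        (z : Fin K → Fin K → ℝ), memLedf G T r x xk f z} =
      {x : Sym2 V → ℝ | ∃ (y : Fin K → V → V → ℝ) (z : Fin K → Fin K → ℝ),
        memLsedc G T r x y z} := by
  ext x
  simp only [Set.mem_setOf_eq]
  constructor
  · -- edf ⊆ sedc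
    rintro ⟨xk, f, z, hxb, hxkb, hzb, hfb, h1, h2, h3, h4, h5⟩
    set Tk : Fin K → Finset V := fun k => Finset.univ.filter (memTkK T r k) with hTkdef
    have hTkmem : ∀ k t, memTkK T r k t → t ∈ Tk k := by
      intro k t ht
      simp only [hTkdef, Finset.mem_filter, Finset.mem_univ, true_and]
      exact ht
    have hTkmem' : ∀ k t, t ∈ Tk k → memTkK T r k t := by
      intro k t ht
      simpa only [hTkdef, Finset.mem_filter, Finset.mem_univ, true_and] using ht
    set y : Fin K → V → V → ℝ := fun k i j =>
      if h : (Tk k).Nonempty then (Tk k).sup' h (fun t => f k t i j) else 0 with hydef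
    have hyge : ∀ k t, t ∈ Tk k → ∀ i j, f k t i j ≤ y k i j := by
      intro k t ht i j
      simp only [hydef]
      have hne : (Tk k).Nonempty := ⟨t, ht⟩
      rw [dif_pos hne]
      exact Finset.le_sup' (fun u => f k u i j) ht
    have hy0 : ∀ (k : Fin K) (i j : V), ¬ G.Adj i j → y k i j = 0 := by
      intro k i j hadj
      simp only [hydef]
      split
      · rename_i h
        apply le_antisymm
        · exact Finset.sup'_le _ _ fun t ht => le_of_eq ((hfb k t (hTkmem' k t ht)).1 i j hadj)
        · obtain ⟨t, ht⟩ := h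
          calc (0:ℝ) = f k t i j := ((hfb k t (hTkmem' k t ht)).1 i j hadj).symm
            _ ≤ _ := Finset.le_sup' (fun u => f k u i j) ht
      · rfl
    have hybd : ∀ (k : Fin K) (i j : V), 0 ≤ y k i j ∧ y k i j ≤ 1 := by
      intro k i j
      simp only [hydef]
      split
      · rename_i h
        obtain ⟨t, ht⟩ := h
        constructor
        · exact le_trans ((hfb k t (hTkmem' k t ht)).2 i j).1 (Finset.le_sup' (fun u => f k u i j) ht)
        · exact Finset.sup'_le _ _ fun u hu => ((hfb k u (hTkmem' k u hu)).2 i j).2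
      · exact ⟨le_rfl, zero_le_one⟩
    refine ⟨y, z, hxb, hy0, hybd, hzb, ?_, h2, h3, ?_⟩
    · -- cut inequalities
      intro k l hkl S hrS hTS
      have hns : ¬ T l ⊆ S := fun hsub => hTS (Finset.inter_eq_left.2 hsub)
      obtain ⟨t, htl, htS⟩ := Finset.not_subset.1 hns
      have htr : t ≠ r k := fun h => htS (by rw [h]; exact hrS)
      have htmem : memTkK T r k t := ⟨⟨l, hkl, htl⟩, htr⟩
      have hflow := h5 k l hkl t htl htr
      have hsum : ∑ i ∈ S, SFAux.excess (f k t) i = - z k l := by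
        have : ∀ i ∈ S, SFAux.excess (f k t) i =
            if i = r k then -(z k l) else if i = t then z k l else 0 := by
          intro i _
          exact hflow i
        rw [Finset.sum_congr rfl this]
        rw [Finset.sum_eq_single_of_mem (r k) hrS]
        · simp
        · intro i hiS hine
          rw [if_neg hine, if_neg (fun h => htS (by rw [← h]; exact hiS))]
      rw [SFAux.sum_excess_subset] at hsum
      have hswap : 0 ≤ acutOut (fun i j => f k t j i) S := by
        apply Finset.sum_nonneg
        intro i _
        apply Finset.sum_nonneg
        intro j _
        exact ((hfb k t htmem).2 j i).1
      have hft : z k l ≤ acutOut (f k t) S := by linarith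
      refine le_trans hft ?_
      apply Finset.sum_le_sum
      intro i _
      apply Finset.sum_le_sum
      intro j _
      exact hyge k t (hTkmem k t htmem) i j
    · -- capacity inequality
      intro i j hadj
      refine le_trans ?_ (h1 i j hadj)
      apply Finset.sum_le_sum
      intro k _
      simp only [hydef]
      split
      · rename_i h
        rw [← le_sub_iff_add_le]
        refine Finset.sup'_le _ _ fun u hu => ?_
        rw [le_sub_iff_add_le, add_comm, ← le_sub_iff_add_le]
        refine Finset.sup'_le _ _ fun t ht => ?_
        rw [le_sub_iff_add_le, add_comm]
        exact h4 k u t (hTkmem' k u hu) (hTkmem' k t ht) i j hadj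
      · simpa using (hxkb k s(i, j) (G.mem_edgeSet.2 hadj)).1
  · -- sedc ⊆ edf
    rintro ⟨y, z, hxb, hy0, hyb, hzb, hcut, h2, h3, h4⟩
    have huniq : ∀ (t : V) (l l' : Fin K), t ∈ T l → t ∈ T l' → l = l' := by
      intro t l l' h h'
      by_contra hne
      exact Finset.disjoint_left.1 (hdisj l l' hne) h h'
    have hyy1 : ∀ i j : V, G.Adj i j → ∀ k : Fin K, y k i j + y k j i ≤ 1 := by
      intro i j hadj k
      have hle : y k i j + y k j i ≤ ∑ k' : Fin K, (y k' i j + y k' j i) :=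
        Finset.single_le_sum
          (fun k' _ => add_nonneg (hyb k' i j).1 (hyb k' j i).1) (Finset.mem_univ k)
      exact hle.trans ((h4 i j hadj).trans (hxb s(i, j) (G.mem_edgeSet.2 hadj)).2)
    have hflow : ∀ (k : Fin K) (t : V), ∃ g : V → V → ℝ,
        (∀ i j, 0 ≤ g i j ∧ g i j ≤ y k i j) ∧
        (∀ l : Fin K, k ≤ l → t ∈ T l → t ≠ r k → ∀ i : V,
          (∑ j, g j i) - (∑ j, g i j) =
            if i = r k then -(z k l) else if i = t then z k l else 0) := by
      intro k t
      by_cases h : ∃ l : Fin K, k ≤ l ∧ t ∈ T l ∧ t ≠ r k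
      · obtain ⟨l, hkl, htl, htr⟩ := h
        obtain ⟨g, hg1, hg2⟩ := SFAux.exists_flow (y k)
          (fun i j => (hyb k i j).1) (fun i => hy0 k i i (G.loopless.irrefl i))
          (r k) t (Ne.symm htr) (z k l) (hzb k l hkl).1
          (fun S hrS htS => hcut k l hkl S hrS
            (fun heq => htS (Finset.inter_eq_left.1 heq htl)))
        refine ⟨g, hg1, fun l' hkl' htl' htr' i => ?_⟩
        rw [huniq t l' l htl' htl]
        simpa [SFAux.excess] using hg2 i
      · exact ⟨fun _ _ => 0, fun i j => ⟨le_rfl, (hyb k i j).1⟩,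
          fun l hkl htl htr => absurd ⟨l, hkl, htl, htr⟩ h⟩
    choose f hf1 hf2 using hflow
    set xk : Fin K → Sym2 V → ℝ := fun k =>
      Sym2.lift ⟨fun i j => y k i j + y k j i, fun i j => by ring⟩ with hxkdef
    have hxkmk : ∀ (k : Fin K) (i j : V), xk k s(i, j) = y k i j + y k j i := by
      intro k i j
      rw [hxkdef]
      simp
    refine ⟨xk, f, z, hxb, ?_, hzb, ?_, ?_, h2, h3, ?_, ?_⟩
    · -- xk bounds
      intro k e he
      induction e using Sym2.ind with
      | _ i j =>
        rw [hxkmk]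
        exact ⟨add_nonneg (hyb k i j).1 (hyb k j i).1,
          hyy1 i j (G.mem_edgeSet.1 he) k⟩
    · -- f bounds
      intro k t ht
      obtain ⟨⟨l, hkl, htl⟩, htr⟩ := ht
      constructor
      · intro i j hadj
        have h0 := hy0 k i j hadj
        have := hf1 k t i j
        linarith [this.1, this.2]
      · intro i j
        exact ⟨(hf1 k t i j).1, (hf1 k t i j).2.trans (hyb k i j).2⟩
    · -- (1)
      intro i j hadj
      calc ∑ k : Fin K, xk k s(i, j) = ∑ k : Fin K, (y k i j + y k j i) :=
            Finset.sum_congr rfl fun k _ => hxkmk k i j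
        _ ≤ x s(i, j) := h4 i j hadj
    · -- (4)
      intro k u t hu ht i j hadj
      rw [hxkmk]
      exact add_le_add (hf1 k u i j).2 (hf1 k t j i).2
    · -- (5)
      intro k l hkl t htl htr i
      exact hf2 k t l hkl htl htr i
end
end

section
/- There exists an instance of the Steiner Forest problem (a graph G with terminal sets T^1,…,T^K) and a feasible Steiner Forest F such that for no choice of root nodes r^k ∈ T^k does there exist an orientation of the edges of F under which, for every k ∈ [K] and every terminal t ∈ T^k, there is a directed path from r^k to t. -/
open Finset
open scoped Classical

noncomputable section

def adjB : Fin 7 → Fin 7 → Bool := fun i j =>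
  decide ((i.val, j.val) ∈ [(0,1),(1,0),(0,2),(2,0),(0,3),(3,0),(1,4),(4,1),(2,5),(5,2),(3,6),(6,3)])

lemma adjB_symm : ∀ a b : Fin 7, adjB a b = true → adjB b a = true := by decide
lemma adjB_irrefl : ∀ a : Fin 7, ¬ adjB a a = true := by decide

def myGraph : SimpleGraph (Fin 7) where
  Adj i j := adjB i j
  symm := ⟨fun a b h => adjB_symm a b h⟩
  loopless := ⟨fun a h => adjB_irrefl a h⟩

instance : DecidableRel myGraph.Adj := fun i j => inferInstanceAs (Decidable (adjB i j = true))

lemma color_const {G : SimpleGraph (Fin 7)} (c : Fin 7 → Bool)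
    (h : ∀ a b, G.Adj a b → c a = c b) {u v : Fin 7} (hR : G.Reachable u v) :
    c u = c v := by
  obtain ⟨w⟩ := hR
  induction w with
  | nil => rfl
  | cons ha p ih => exact (h _ _ ha).trans ih

lemma bridge_helper (v w : Fin 7) (c : Fin 7 → Bool)
    (hpres : ∀ a b : Fin 7, adjB a b = true → ¬((a = v ∧ b = w) ∨ (a = w ∧ b = v)) → c a = c b)
    (hcv : c v ≠ c w) :
    ¬ (myGraph \ SimpleGraph.fromEdgeSet {s(v, w)}).Reachable v w := by
  intro hR
  apply hcv
  refine color_const c ?_ hR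
  intro a b hab
  rw [SimpleGraph.sdiff_adj, SimpleGraph.fromEdgeSet_adj] at hab
  obtain ⟨h1, h2⟩ := hab
  refine hpres a b h1 ?_
  intro hor
  exact h2 ⟨by simpa [Sym2.eq_iff] using hor, fun h => adjB_irrefl a (h ▸ h1)⟩

lemma myGraph_acyclic : myGraph.IsAcyclic := by
  rw [SimpleGraph.isAcyclic_iff_forall_adj_isBridge]
  intro v w hvw
  rw [SimpleGraph.isBridge_iff]
  have hvw' : adjB v w = true := hvw
  fin_cases v <;> fin_cases w <;> simp only at hvw' ⊢ <;>
    first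
    | exact absurd hvw' (by decide)
    | exact bridge_helper _ _ (fun x => decide (x.val ∈ [1,4])) (by decide) (by decide)
    | exact bridge_helper _ _ (fun x => decide (x.val ∈ [2,5])) (by decide) (by decide)
    | exact bridge_helper _ _ (fun x => decide (x.val ∈ [3,6])) (by decide) (by decide)
    | exact bridge_helper _ _ (fun x => decide (x.val = 4)) (by decide) (by decide)
    | exact bridge_helper _ _ (fun x => decide (x.val = 5)) (by decide) (by decide)
    | exact bridge_helper _ _ (fun x => decide (x.val = 6)) (by decide) (by decide)

lemma reach0 : ∀ v : Fin 7, myGraph.Reachable 0 v := by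
  have a1 : myGraph.Adj 0 1 := by decide
  have a2 : myGraph.Adj 0 2 := by decide
  have a3 : myGraph.Adj 0 3 := by decide
  have a4 : myGraph.Adj 1 4 := by decide
  have a5 : myGraph.Adj 2 5 := by decide
  have a6 : myGraph.Adj 3 6 := by decide
  intro v
  fin_cases v
  · exact SimpleGraph.Reachable.refl 0
  · exact a1.reachable
  · exact a2.reachable
  · exact a3.reachable
  · exact a1.reachable.trans a4.reachable
  · exact a2.reachable.trans a5.reachable
  · exact a3.reachable.trans a6.reachable

lemma cross {α : Type*} {D : α → α → Prop} (S : α → Prop) {u v : α}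
    (h : Relation.ReflTransGen D u v) (hu : ¬ S u) (hv : S v) :
    ∃ a b, ¬ S a ∧ S b ∧ D a b := by
  induction h with
  | refl => exact absurd hv hu
  | @tail b c hab hbc ih =>
    by_cases hb : S b
    · exact ih hb
    · exact ⟨b, c, hb, hv, hbc⟩

lemma arc_unique {D : Fin 7 → Fin 7 → Prop} (hD : ∀ i j, D i j → myGraph.Adj i j)
    (S : Fin 7 → Bool) {u v : Fin 7} (h : Relation.ReflTransGen D u v)
    (hu : S u = false) (hv : S v = true) (x y : Fin 7)
    (huniq : ∀ a b : Fin 7, adjB a b = true → S a = false → S b = true → a = x ∧ b = y) :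
    D x y := by
  obtain ⟨a, b, ha, hb, hab⟩ := cross (fun z => S z = true) h (by simp [hu]) hv
  obtain ⟨rfl, rfl⟩ := huniq a b (hD a b hab) (by simpa using ha) hb
  exact hab

/-- There is a Steiner Forest instance and a feasible Steiner
Forest `H` such that for *no* choice of root nodes `r k ∈ T k` the edges of `H`
can be oriented so that every root `r k` has a directed path to every terminal
of `T k`. -/
theorem exists_unorientable_steinerForest :
    ∃ (n : ℕ) (G : SimpleGraph (Fin n)) (K : ℕ) (T : Fin K → Finset (Fin n)),
      (∀ k, (T k).Nonempty) ∧
      (∀ k l : Fin K, k ≠ l → Disjoint (T k) (T l)) ∧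
      ∃ H : SimpleGraph (Fin n),
        -- `H` is a feasible Steiner Forest of the instance
        H ≤ G ∧ H.IsAcyclic ∧
        (∀ k : Fin K, ∀ s ∈ T k, ∀ t ∈ T k, H.Reachable s t) ∧
        -- but no choice of roots admits a suitable orientation
        (∀ r : Fin K → Fin n, (∀ k, r k ∈ T k) →
          ¬ ∃ D : Fin n → Fin n → Prop,
              (∀ i j, D i j → H.Adj i j) ∧
              (∀ i j, H.Adj i j → (D i j ↔ ¬ D j i)) ∧
              (∀ k : Fin K, ∀ t ∈ T k, Relation.ReflTransGen D (r k) t)) := by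
  refine ⟨7, myGraph, 3, ![{4,2},{5,3},{6,1}], ?_, ?_, myGraph, le_refl _, myGraph_acyclic, ?_, ?_⟩
  · intro k; fin_cases k <;> simp
  · intro k l hkl; fin_cases k <;> fin_cases l <;> simp_all
  · intro k s hs t ht
    exact (reach0 s).symm.trans (reach0 t)
  · rintro r hr ⟨D, hD1, hD2, hD3⟩
    -- cuts
    set c14 : Fin 7 → Bool := fun x => decide (x.val ∈ [1,4]) with hc14
    set c25 : Fin 7 → Bool := fun x => decide (x.val ∈ [2,5]) with hc25
    set c36 : Fin 7 → Bool := fun x => decide (x.val ∈ [3,6]) with hc36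
    -- symmetric facts
    have s1 : D 0 1 ↔ ¬ D 1 0 := hD2 0 1 (by decide)
    have s2 : D 0 2 ↔ ¬ D 2 0 := hD2 0 2 (by decide)
    have s3 : D 0 3 ↔ ¬ D 3 0 := hD2 0 3 (by decide)
    -- k = 0 : T 0 = {4, 2}
    have h0 : (D 0 2 ∧ D 1 0) ∨ (D 0 1 ∧ D 2 0) := by
      have hm := hr 0
      simp [Matrix.cons_val_zero] at hm
      rcases hm with h | h
      · left
        have hrt : Relation.ReflTransGen D (r 0) 2 := hD3 0 2 (by simp)
        rw [h] at hrt
        exact ⟨arc_unique hD1 c25 hrt (by decide) (by decide) 0 2 (by decide),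
               arc_unique hD1 (fun x => ! c14 x) hrt (by decide) (by decide) 1 0 (by decide)⟩
      · right
        have hrt : Relation.ReflTransGen D (r 0) 4 := hD3 0 4 (by simp)
        rw [h] at hrt
        exact ⟨arc_unique hD1 c14 hrt (by decide) (by decide) 0 1 (by decide),
               arc_unique hD1 (fun x => ! c25 x) hrt (by decide) (by decide) 2 0 (by decide)⟩
    -- k = 1 : T 1 = {5, 3}
    have h1 : (D 0 3 ∧ D 2 0) ∨ (D 0 2 ∧ D 3 0) := by
      have hm := hr 1
      simp [Matrix.cons_val_one] at hm
      rcases hm with h | h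
      · left
        have hrt : Relation.ReflTransGen D (r 1) 3 := hD3 1 3 (by simp)
        rw [h] at hrt
        exact ⟨arc_unique hD1 c36 hrt (by decide) (by decide) 0 3 (by decide),
               arc_unique hD1 (fun x => ! c25 x) hrt (by decide) (by decide) 2 0 (by decide)⟩
      · right
        have hrt : Relation.ReflTransGen D (r 1) 5 := hD3 1 5 (by simp)
        rw [h] at hrt
        exact ⟨arc_unique hD1 c25 hrt (by decide) (by decide) 0 2 (by decide),
               arc_unique hD1 (fun x => ! c36 x) hrt (by decide) (by decide) 3 0 (by decide)⟩
    -- k = 2 : T 2 = {6, 1}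
    have h2 : (D 0 1 ∧ D 3 0) ∨ (D 0 3 ∧ D 1 0) := by
      have hm := hr 2
      simp at hm
      rcases hm with h | h
      · left
        have hrt : Relation.ReflTransGen D (r 2) 1 := hD3 2 1 (by simp)
        rw [h] at hrt
        exact ⟨arc_unique hD1 c14 hrt (by decide) (by decide) 0 1 (by decide),
               arc_unique hD1 (fun x => ! c36 x) hrt (by decide) (by decide) 3 0 (by decide)⟩
      · right
        have hrt : Relation.ReflTransGen D (r 2) 6 := hD3 2 6 (by simp)
        rw [h] at hrt
        exact ⟨arc_unique hD1 c36 hrt (by decide) (by decide) 0 3 (by decide),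
               arc_unique hD1 (fun x => ! c14 x) hrt (by decide) (by decide) 1 0 (by decide)⟩
    tauto
end
end
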